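/- Let x, y be positive integers, let a, b be nonnegative integers, and let c ≥ 1 be an integer. Then (x+y+a−1)!·(b−1)! + (x+y+b−1)!·(a−1)! > (x+a−1)!·(y+b−1)! + (x+b−1)!·(y+a−1)! whenever a, b ≥ 1. -/

import Mathlib

/-!
Writing `(m + c - 1)! = (c - 1)! * c.ascFactorial m` and dividing by `(a - 1)! * (b - 1)!`, the
claim becomes `aˣ bʸ + bˣ aʸ < aˣ (a + x)ʸ + bˣ (b + x)ʸ`, where `cᵐ` is `c.ascFactorial m`. For `b ≤ a` this
is the binary rearrangement inequality, made strict because rising factorials of positive length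
grow strictly with their base.
-/

open Nat

theorem mul_add_mul_lt_mul_add_mul_of_add_lt {R : Type*} [CommSemiring R] [PartialOrder R]
    [IsStrictOrderedRing R] [ExistsAddOfLE R] {u v p q p' q' : R}
    (hvu : v ≤ u) (hv : 0 < v) (hqp' : q ≤ p') (h : p + q < p' + q') :
    u * q + v * p < u * p' + v * q' := by
  have rearrangement : v * p' + u * q ≤ v * q + u * p' := mul_add_mul_le_mul_add_mul hvu hqp'
  have scaled : v * (p + q) < v * (p' + q') := mul_lt_mul_of_pos_left h hv
  refine lt_of_add_lt_add_left (a := v * p' + v * q) ?_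
  convert add_lt_add_of_le_of_lt rearrangement scaled using 1 <;> ring

theorem Nat.ascFactorial_lt_ascFactorial {n m k : ℕ} (hn : 0 < n) (h : n < m) (hk : 0 < k) :
    n.ascFactorial k < m.ascFactorial k := by
  obtain ⟨k, rfl⟩ := exists_eq_add_one_of_ne_zero hk.ne'
  obtain ⟨n, rfl⟩ := exists_eq_add_one_of_ne_zero hn.ne'
  rw [ascFactorial_succ, ascFactorial_succ]
  exact Nat.mul_lt_mul_of_lt_of_le (by omega) (ascFactorial_le k h.le)
    ((ascFactorial_pos n k).trans_le (ascFactorial_le k h.le))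

theorem Nat.ascFactorial_mul_add_lt_ascFactorial_add {a b x y : ℕ} (ha : 0 < a) (hb : 0 < b)
    (hx : 0 < x) (hy : 0 < y) :
    a.ascFactorial x * b.ascFactorial y + b.ascFactorial x * a.ascFactorial y <
      a.ascFactorial (x + y) + b.ascFactorial (x + y) := by
  wlog hba : b ≤ a generalizing a b
  · have := this hb ha (by omega)
    omega
  rw [← ascFactorial_mul_ascFactorial a x y, ← ascFactorial_mul_ascFactorial b x y]
  refine mul_add_mul_lt_mul_add_mul_of_add_lt (ascFactorial_le x hba) ?_ ?_ ?_
  · obtain ⟨b, rfl⟩ := exists_eq_add_one_of_ne_zero hb.ne'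
    exact ascFactorial_pos b x
  · exact ascFactorial_le y (by omega)
  · exact add_lt_add (ascFactorial_lt_ascFactorial ha (by omega) hy)
      (ascFactorial_lt_ascFactorial hb (by omega) hy)

theorem factorial_sum_inequality_shifted_general (x y a b : ℕ) (hx : 0 < x) (hy : 0 < y)
    (ha : 1 ≤ a) (hb : 1 ≤ b) :
    (x + y + a - 1).factorial * (b - 1).factorial +
        (x + y + b - 1).factorial * (a - 1).factorial >
      (x + a - 1).factorial * (y + b - 1).factorial +
        (x + b - 1).factorial * (y + a - 1).factorial := by
  have factorial_eq {c : ℕ} (hc : 0 < c) (m : ℕ) :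
      (m + c - 1)! = (c - 1)! * c.ascFactorial m := by
    rw [add_comm, factorial_mul_ascFactorial' c m hc]
  simp only [factorial_eq ha, factorial_eq hb]
  have key := ascFactorial_mul_add_lt_ascFactorial_add ha hb hx hy
  have hpos : 0 < (a - 1)! * (b - 1)! := mul_pos (factorial_pos _) (factorial_pos _)
  calc _ = (a - 1)! * (b - 1)! *
          (a.ascFactorial x * b.ascFactorial y + b.ascFactorial x * a.ascFactorial y) := by ring
    _ < (a - 1)! * (b - 1)! * (a.ascFactorial (x + y) + b.ascFactorial (x + y)) :=
      mul_lt_mul_of_pos_left key hpos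
    _ = _ := by ring

/-- The factorial inequality of Lemma 2.4 applied with shifted arguments `a−1, b−1`:
for positive integers `x, y`, an integer `c ≥ 1`, and integers `a, b ≥ 1`,
`(x+y+a−1)!·(b−1)! + (x+y+b−1)!·(a−1)! > (x+a−1)!·(y+b−1)! + (x+b−1)!·(y+a−1)!`. -/
theorem factorial_sum_inequality_shifted (x y a b c : ℕ) (hx : 0 < x) (hy : 0 < y)
    (hc : 1 ≤ c) (ha : 1 ≤ a) (hb : 1 ≤ b) :
    (x + y + a - 1).factorial * (b - 1).factorial +
        (x + y + b - 1).factorial * (a - 1).factorial >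
      (x + a - 1).factorial * (y + b - 1).factorial +
        (x + b - 1).factorial * (y + a - 1).factorial :=
  factorial_sum_inequality_shifted_general x y a b hx hy ha hb
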